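/- Suppose r ≥ 2 and P is the convex hull in ℝ² of a finite set N ⊂ ℤ² of points with nonzero coefficients of a Laurent polynomial φ over a field k, with φ irreducible in k[v^{±1}, w^{±1}] and φ ∈ (v-1, w-1)^r. If P contains r+1 collinear lattice points, then a contradiction arises; equivalently, the Newton polygon of such an irreducible φ cannot contain r+1 lattice points on a single line, provided additionally that 2·area(P) < r² (i.e., φ is an r-nct). -/

import Mathlib

/-- The monomial `v` in `k[v^{±1}, w^{±1}] = k[ℤ × ℤ]`. -/
noncomputable def V (k : Type*) [Field k] : AddMonoidAlgebra k (ℤ × ℤ) :=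
  AddMonoidAlgebra.single (1, 0) 1

/-- The monomial `w`. -/
noncomputable def W (k : Type*) [Field k] : AddMonoidAlgebra k (ℤ × ℤ) :=
  AddMonoidAlgebra.single (0, 1) 1

/-- The natural embedding of `ℤ²` into `ℝ²`. -/
noncomputable def emb : ℤ × ℤ → ℝ × ℝ := fun p => ((p.1 : ℝ), (p.2 : ℝ))

/-- For a subset `U` of `ℤ²`, the `k`-span of the monomials `v^α w^β`,
`(α, β) ∈ U`, inside `k[v^{±1}, w^{±1}]`. -/
noncomputable def kspan (k : Type*) [Field k] (U : Set (ℤ × ℤ)) :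
    Submodule k (AddMonoidAlgebra k (ℤ × ℤ)) :=
  Submodule.span k
    ((fun p : ℤ × ℤ => (AddMonoidAlgebra.single p 1 : AddMonoidAlgebra k (ℤ × ℤ))) '' U)

/-!
Choose a basis `(u, s)` of `ℤ²` with `u` along the line, so that `ℓ = det(u, ·)` is constant on
the `r + 1` points and `det(s, ·)` takes `r + 1` distinct values on them. In the area-preserving
coordinates `(ℓ, det(s, ·))` the polygon `P` then contains a segment of length `≥ r` on a level set
of `ℓ`, and together with the exponents of `φ` where `ℓ` is extremal it contains two triangles,
so `2·|P| ≥ r · (max ℓ - min ℓ)` over the support of `φ`.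

Pushing `φ` forward along `ℓ` to `k[t^{±1}]` gives a multiple of `(t - 1)^r`. If it is nonzero,
its support, which lies in the image under `ℓ` of the support of `φ`, has width `≥ r`; this gives
`2·|P| ≥ r²`. If it is zero, `φ` is a multiple of `x^u - 1`, hence associate to it by
irreducibility; but `x^u - 1` does not lie in `𝔭²`, as the derivation in direction `det(s, ·)`
shows.
-/

open AddMonoidAlgebra

lemma Polynomial.add_natTrailingDegree_le_natDegree_of_dvd {R : Type*} [CommRing R]
    [IsDomain R] {p : Polynomial R} (hp : p ≠ 0) {a : R} (ha : a ≠ 0) {r : ℕ}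
    (h : (X - C a) ^ r ∣ p) : r + p.natTrailingDegree ≤ p.natDegree := by
  obtain ⟨q, rfl⟩ := h
  have hq : q ≠ 0 := right_ne_zero_of_mul hp
  have hXa : (X - C a) ^ r ≠ 0 := pow_ne_zero _ (X_sub_C_ne_zero a)
  have hXa₀ : ((X - C a) ^ r).natTrailingDegree = 0 :=
    natTrailingDegree_eq_zero.mpr (Or.inr (by simp [coeff_zero_eq_eval_zero, ha]))
  rw [natDegree_mul hXa hq, natTrailingDegree_mul hXa hq, hXa₀, natDegree_pow, natDegree_X_sub_C]
  have := natTrailingDegree_le_natDegree q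
  omega

namespace AddMonoidAlgebra

section AugmentationIdeal

variable (k G : Type*) [CommRing k] [AddCommGroup G]

noncomputable def augIdeal : Ideal k[G] :=
  Ideal.span (Set.range fun g : G ↦ single g (1 : k) - 1)

variable {k G}

lemma single_sub_one_mem_augIdeal (g : G) : single g (1 : k) - 1 ∈ augIdeal k G :=
  Ideal.subset_span ⟨g, rfl⟩

lemma single_add_sub_one (g h : G) :
    single (g + h) (1 : k) - 1 = single g 1 * (single h 1 - 1) + (single g 1 - 1) := by
  rw [mul_sub, single_mul_single, one_mul, mul_one]
  ring

lemma single_zsmul_sub_one_mem {I : Ideal k[G]} {u : G} (hu : single u (1 : k) - 1 ∈ I)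
    (n : ℤ) : single (n • u) (1 : k) - 1 ∈ I := by
  induction n with
  | zero => simp [← one_def]
  | succ n ih =>
    rw [add_smul, one_smul, single_add_sub_one]
    exact I.add_mem (I.mul_mem_left _ hu) ih
  | pred n ih =>
    have h := single_add_sub_one (k := k) ((-n - 1 : ℤ) • u) u
    rw [← add_one_zsmul, sub_add_cancel] at h
    rw [show single ((-n - 1 : ℤ) • u) (1 : k) - 1 = _ from eq_sub_of_add_eq' h.symm]
    exact I.sub_mem ih (I.mul_mem_left _ hu)

lemma mem_of_mapDomain_eq_zero {H : Type*} [AddCommGroup H] (ℓ : G →+ H) (s : H → G)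
    (hs : ∀ h, ℓ (s h) = h) {I : Ideal k[G]} (hI : ∀ g, ℓ g = 0 → single g (1 : k) - 1 ∈ I)
    {f : k[G]} (hf : mapDomain ℓ f = 0) : f ∈ I := by
  suffices ∀ f : k[G], f - mapDomain s (mapDomain ℓ f) ∈ I by simpa [hf] using this f
  intro f
  induction f using induction_linear with
  | zero => simp
  | add f g hf hg => simpa [mapDomain_add, add_sub_add_comm] using I.add_mem hf hg
  | single g c =>
    have hg : single g c - single (s (ℓ g)) c
        = single (s (ℓ g)) c * (single (g - s (ℓ g)) 1 - 1) := by
      rw [mul_sub, single_mul_single, mul_one, mul_one, add_sub_cancel]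
    rw [mapDomain_single, mapDomain_single, hg]
    exact I.mul_mem_left _ (hI _ (by rw [map_sub, hs, sub_self]))

lemma map_mapDomainRingHom_augIdeal_le {H : Type*} [AddCommGroup H] (ℓ : G →+ H) :
    (augIdeal k G).map (mapDomainRingHom k ℓ) ≤ augIdeal k H := by
  rw [augIdeal, Ideal.map_span, Ideal.span_le]
  rintro _ ⟨_, ⟨g, rfl⟩, rfl⟩
  rw [map_sub, map_one, mapDomainRingHom_apply, mapDomain_single]
  exact single_sub_one_mem_augIdeal (ℓ g)

lemma augIdeal_int_le : augIdeal k ℤ ≤ Ideal.span {single 1 (1 : k) - 1} := by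
  rw [augIdeal, Ideal.span_le]
  rintro _ ⟨n, rfl⟩
  simpa using
    single_zsmul_sub_one_mem (Ideal.mem_span_singleton_self (single (1 : ℤ) (1 : k) - 1)) n

open DualNumber TrivSqZeroExt

/-- The `ε`-component is the derivation of `k[G]` at the augmentation in direction `μ`. -/
noncomputable def toDualNumber (μ : G →+ k) : k[G] →ₐ[k] DualNumber k :=
  lift k (DualNumber k) G
    { toFun g := 1 + μ g.toAdd • ε
      map_one' := by simp
      map_mul' g h := by ext <;> simp [add_smul, add_comm] }

lemma toDualNumber_single_sub_one (μ : G →+ k) (g : G) :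
    toDualNumber μ (single g 1 - 1) = μ g • ε := by
  simp [toDualNumber, lift_single]

lemma fst_toDualNumber_of_mem (μ : G →+ k) {f : k[G]} (hf : f ∈ augIdeal k G) :
    (toDualNumber μ f).fst = 0 := by
  have : augIdeal k G ≤ RingHom.ker ((fstHom k k k).comp (toDualNumber μ)) := by
    rw [augIdeal, Ideal.span_le]
    rintro _ ⟨g, rfl⟩
    simp [toDualNumber_single_sub_one]
  exact this hf

lemma toDualNumber_eq_zero_of_mem_sq (μ : G →+ k) {f : k[G]} (hf : f ∈ augIdeal k G ^ 2) :
    toDualNumber μ f = 0 := by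
  rw [pow_two] at hf
  refine Submodule.mul_induction_on hf (fun x hx y hy ↦ ?_) (fun x y hx hy ↦ ?_)
  · ext <;> simp [fst_toDualNumber_of_mem μ hx, fst_toDualNumber_of_mem μ hy]
  · rw [map_add, hx, hy, add_zero]

lemma single_sub_one_notMem_augIdeal_sq (μ : G →+ k) {u : G} (hu : μ u ≠ 0) :
    single u (1 : k) - 1 ∉ augIdeal k G ^ 2 := fun h ↦ by
  have := congrArg snd (toDualNumber_eq_zero_of_mem_sq μ h)
  simp [toDualNumber_single_sub_one, hu] at this

lemma not_isUnit_of_mem_augIdeal [Nontrivial k] {f : k[G]} (hf : f ∈ augIdeal k G) :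
    ¬IsUnit f := fun h ↦ by
  simpa [isUnit_iff_isUnit_fst, fst_toDualNumber_of_mem 0 hf] using h.map (toDualNumber 0)

lemma mapDomain_ne_zero_of_irreducible [Nontrivial k] {ℓ : G →+ ℤ} {s u : G} (hs : ℓ s = 1)
    (hker : ∀ g, ℓ g = 0 → g ∈ AddSubgroup.zmultiples u) {μ : G →+ k} (hμ : μ u ≠ 0)
    {φ : k[G]} (hirr : Irreducible φ) (hφ : φ ∈ augIdeal k G ^ 2) : mapDomain ℓ φ ≠ 0 := by
  intro h
  have hI (g : G) (hg : ℓ g = 0) : single g (1 : k) - 1 ∈ Ideal.span {single u 1 - 1} := by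
    obtain ⟨n, rfl⟩ := hker g hg
    exact single_zsmul_sub_one_mem (Ideal.mem_span_singleton_self _) n
  obtain ⟨e, he⟩ := Ideal.mem_span_singleton.mp
    (mem_of_mapDomain_eq_zero ℓ (· • s) (by simp [hs]) hI h)
  rcases hirr.isUnit_or_isUnit he with hu | hunit
  · exact not_isUnit_of_mem_augIdeal (single_sub_one_mem_augIdeal u) hu
  · apply single_sub_one_notMem_augIdeal_sq μ hμ
    rw [show single u 1 - 1 = φ * ↑hunit.unit⁻¹ by
      rw [he, mul_assoc, IsUnit.mul_val_inv, mul_one]]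
    exact Ideal.mul_mem_right _ _ hφ

end AugmentationIdeal

variable {k G : Type*} [CommRing k] [IsDomain k] [AddCommGroup G]

open LaurentPolynomial Polynomial in
lemma exists_le_sub_of_single_one_sub_one_pow_dvd {f : k[ℤ]} (hf : f ≠ 0) {r : ℕ}
    (h : (single 1 1 - 1 : k[ℤ]) ^ r ∣ f) :
    ∃ a ∈ f.coeff.support, ∃ b ∈ f.coeff.support, (r : ℤ) ≤ b - a := by
  obtain ⟨q, rfl⟩ := h
  obtain ⟨n, q', hq'⟩ := exists_T_pow q
  set p : k[X] := (X - Polynomial.C 1) ^ r * q'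
  have hp : toLaurent p = (single 1 1 - 1 : k[ℤ]) ^ r * q * T n := by
    rw [map_mul, map_pow, map_sub, toLaurent_X, toLaurent_C, map_one, hq', mul_assoc]
    rfl
  have hp₀ : p ≠ 0 := by
    rintro h₀
    rw [h₀, map_zero, eq_comm, (isUnit_T (n : ℤ)).mul_left_eq_zero] at hp
    exact hf hp
  have hsupp (m : ℕ) (hm : m ∈ p.support) :
      ∃ a ∈ ((single 1 1 - 1 : k[ℤ]) ^ r * q).coeff.support, a + n = m := by
    have : (m : ℤ) ∈ (toLaurent p).coeff.support := by
      rw [support_coeff_toLaurent]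
      exact Finset.mem_map_of_mem _ hm
    rw [hp, T, support_coeff_mul_single _ _ (by simp)] at this
    simpa using this
  obtain ⟨a, ha, hae⟩ := hsupp _ (natTrailingDegree_mem_support_of_nonzero hp₀)
  obtain ⟨b, hb, hbe⟩ := hsupp _ (natDegree_mem_support_of_nonzero hp₀)
  refine ⟨a, ha, b, hb, ?_⟩
  have := add_natTrailingDegree_le_natDegree_of_dvd hp₀ one_ne_zero (dvd_mul_right _ q')
  omega

theorem exists_le_sub_of_mem_augIdeal_pow {ℓ : G →+ ℤ} {s u : G} (hs : ℓ s = 1)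
    (hker : ∀ g, ℓ g = 0 → g ∈ AddSubgroup.zmultiples u) {μ : G →+ k} (hμ : μ u ≠ 0)
    {r : ℕ} (hr : 2 ≤ r) {φ : k[G]} (hirr : Irreducible φ) (hφ : φ ∈ augIdeal k G ^ r) :
    ∃ a ∈ φ.coeff.support, ∃ b ∈ φ.coeff.support, (r : ℤ) ≤ ℓ b - ℓ a := by
  classical
  have hdvd : (single 1 1 - 1 : k[ℤ]) ^ r ∣ mapDomain ℓ φ := by
    rw [← Ideal.mem_span_singleton, ← Ideal.span_singleton_pow]
    have := Ideal.mem_map_of_mem (mapDomainRingHom k ℓ) hφ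
    rw [Ideal.map_pow] at this
    exact Ideal.pow_right_mono ((map_mapDomainRingHom_augIdeal_le ℓ).trans augIdeal_int_le) r this
  obtain ⟨m, hm, n, hn, hmn⟩ := exists_le_sub_of_single_one_sub_one_pow_dvd
    (mapDomain_ne_zero_of_irreducible hs hker hμ hirr (Ideal.pow_le_pow_right hr hφ)) hdvd
  obtain ⟨a, ha, rfl⟩ := Finset.mem_image.mp (Finsupp.mapDomain_support hm)
  obtain ⟨b, hb, rfl⟩ := Finset.mem_image.mp (Finsupp.mapDomain_support hn)
  exact ⟨a, ha, b, hb, hmn⟩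

end AddMonoidAlgebra

section PlaneGeometry

open MeasureTheory Set

noncomputable def planeMap (α β γ δ : ℝ) : (ℝ × ℝ) →ₗ[ℝ] (ℝ × ℝ) where
  toFun p := (α * p.1 + β * p.2, γ * p.1 + δ * p.2)
  map_add' p q := by ext <;> simp only [Prod.fst_add, Prod.snd_add] <;> ring
  map_smul' c p := by
    ext <;> simp only [Prod.smul_fst, Prod.smul_snd, smul_eq_mul, RingHom.id_apply] <;> ring

@[simp] lemma planeMap_apply (α β γ δ : ℝ) (p : ℝ × ℝ) :
    planeMap α β γ δ p = (α * p.1 + β * p.2, γ * p.1 + δ * p.2) := rfl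

lemma det_planeMap (α β γ δ : ℝ) : LinearMap.det (planeMap α β γ δ) = α * δ - β * γ := by
  rw [← LinearMap.det_toMatrix (Module.Basis.finTwoProd ℝ), Matrix.det_fin_two]
  simp [LinearMap.toMatrix_apply]

lemma volume_image_planeMap (α β γ δ : ℝ) (s : Set (ℝ × ℝ)) :
    volume (planeMap α β γ δ '' s) = ENNReal.ofReal |α * δ - β * γ| * volume s := by
  rw [Measure.addHaar_image_linearMap, det_planeMap]

lemma integral_one_sub_div_sub (l u : ℝ) (h : l ≠ u) :
    ∫ x in l..u, (1 - (x - l) / (u - l)) = (u - l) / 2 := by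
  rw [intervalIntegral.integral_sub intervalIntegrable_const
      ((by fun_prop : Continuous _).intervalIntegrable _ _),
    intervalIntegral.integral_div, intervalIntegral.integral_comp_sub_right fun x ↦ x]
  simp
  field_simp [sub_ne_zero.mpr h.symm]
  ring

lemma ofReal_le_volume_inter_right {P : Set (ℝ × ℝ)} (hP : Convex ℝ P) {a b c : ℝ × ℝ}
    (ha : a ∈ P) (hb : b ∈ P) (hc : c ∈ P) (hab₁ : a.1 = b.1) (hab₂ : a.2 ≤ b.2) :
    ENNReal.ofReal ((b.2 - a.2) * (c.1 - a.1) / 2) ≤ volume (P ∩ {p | a.1 < p.1}) := by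
  rcases le_or_gt c.1 a.1 with hca | hac
  · rw [ENNReal.ofReal_of_nonpos (by nlinarith)]
    exact bot_le
  -- the triangle `abc`, as the region between the lines `ac` and `bc`
  set t : ℝ → ℝ := fun x ↦ (x - a.1) / (c.1 - a.1)
  set f : ℝ → ℝ := fun x ↦ a.2 + t x * (c.2 - a.2)
  set g : ℝ → ℝ := fun x ↦ b.2 + t x * (c.2 - b.2)
  have ht (x : ℝ) (hx : x ∈ Ioo a.1 c.1) : t x ∈ Icc 0 1 :=
    ⟨div_nonneg (by linarith [hx.1]) (by linarith),
      (div_le_one (by linarith)).mpr (by linarith [hx.2])⟩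
  have hfg (x : ℝ) (hx : x ∈ Ioo a.1 c.1) : f x ≤ g x := by
    have := (ht x hx).2
    simp only [f, g]
    nlinarith
  have hsub : regionBetween f g (Ioo a.1 c.1) ⊆ P ∩ {p | a.1 < p.1} := by
    rintro ⟨x, y⟩ ⟨hx, hy⟩
    refine ⟨?_, hx.1⟩
    have hf : (x, f x) ∈ P := by
      convert hP.add_smul_sub_mem ha hc (ht x hx) using 1
      ext
      · simp [t]; field_simp; ring
      · simp [f]
    have hg : (x, g x) ∈ P := by
      convert hP.add_smul_sub_mem hb hc (ht x hx) using 1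
      ext
      · simp [t, ← hab₁]; field_simp; ring
      · simp [g]
    refine hP.segment_subset hf hg ?_
    rw [← Prod.image_mk_segment_right, segment_eq_Icc (hfg x hx)]
    exact ⟨y, Ioo_subset_Icc_self hy, rfl⟩
  have hvol : volume (regionBetween f g (Ioo a.1 c.1))
      = ENNReal.ofReal ((b.2 - a.2) * (c.1 - a.1) / 2) := by
    rw [Measure.volume_eq_prod, volume_regionBetween_eq_integral
      ((by fun_prop : Continuous f).integrableOn_Icc.mono_set Ioo_subset_Icc_self)
      ((by fun_prop : Continuous g).integrableOn_Icc.mono_set Ioo_subset_Icc_self)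
      measurableSet_Ioo hfg, ← integral_Ioc_eq_integral_Ioo,
      ← intervalIntegral.integral_of_le hac.le]
    have hgf : g - f = fun x ↦ (b.2 - a.2) * (1 - (x - a.1) / (c.1 - a.1)) := by
      ext x
      simp only [Pi.sub_apply, f, g, t]
      ring
    rw [hgf, intervalIntegral.integral_const_mul, integral_one_sub_div_sub _ _ hac.ne]
    ring_nf
  exact hvol ▸ measure_mono hsub

lemma ofReal_le_volume_inter_left {P : Set (ℝ × ℝ)} (hP : Convex ℝ P) {a b c : ℝ × ℝ}
    (ha : a ∈ P) (hb : b ∈ P) (hc : c ∈ P) (hab₁ : a.1 = b.1) (hab₂ : a.2 ≤ b.2) :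
    ENNReal.ofReal ((b.2 - a.2) * (a.1 - c.1) / 2) ≤ volume (P ∩ {p | p.1 < a.1}) := by
  set σ := planeMap (-1) 0 0 1
  have hσ (p : ℝ × ℝ) : σ p = (-p.1, p.2) := by simp [σ]
  have hsub : σ '' P ∩ {p | (σ a).1 < p.1} ⊆ σ '' (P ∩ {p | p.1 < a.1}) := by
    rintro _ ⟨⟨p, hp, rfl⟩, h⟩
    exact ⟨p, ⟨hp, by simpa [hσ] using h⟩, rfl⟩
  calc ENNReal.ofReal ((b.2 - a.2) * (a.1 - c.1) / 2)
      = ENNReal.ofReal (((σ b).2 - (σ a).2) * ((σ c).1 - (σ a).1) / 2) := by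
        simp only [hσ]
        ring_nf
    _ ≤ volume (σ '' P ∩ {p | (σ a).1 < p.1}) :=
        ofReal_le_volume_inter_right (hP.linear_image σ) (mem_image_of_mem σ ha)
          (mem_image_of_mem σ hb) (mem_image_of_mem σ hc) (by simp [hσ, hab₁]) (by simpa [hσ])
    _ ≤ volume (σ '' (P ∩ {p | p.1 < a.1})) := measure_mono hsub
    _ = volume (P ∩ {p | p.1 < a.1}) := by
        rw [volume_image_planeMap]
        norm_num

theorem ofReal_mul_le_two_mul_volume {P : Set (ℝ × ℝ)} (hP : Convex ℝ P) {a b c c' : ℝ × ℝ}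
    (ha : a ∈ P) (hb : b ∈ P) (hc : c ∈ P) (hc' : c' ∈ P) (hab₁ : a.1 = b.1) (hab₂ : a.2 ≤ b.2) :
    ENNReal.ofReal ((b.2 - a.2) * (c.1 - c'.1)) ≤ 2 * volume P := by
  set H : Set (ℝ × ℝ) := {p | a.1 < p.1}
  have hH : MeasurableSet H := measurableSet_lt measurable_const measurable_fst
  calc ENNReal.ofReal ((b.2 - a.2) * (c.1 - c'.1))
      = 2 * ENNReal.ofReal ((b.2 - a.2) * (c.1 - a.1) / 2 + (b.2 - a.2) * (a.1 - c'.1) / 2) := by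
        rw [← ENNReal.ofReal_ofNat 2, ← ENNReal.ofReal_mul zero_le_two]
        ring_nf
    _ ≤ 2 * (ENNReal.ofReal ((b.2 - a.2) * (c.1 - a.1) / 2)
          + ENNReal.ofReal ((b.2 - a.2) * (a.1 - c'.1) / 2)) := by
        gcongr
        exact ENNReal.ofReal_add_le
    _ ≤ 2 * (volume (P ∩ H) + volume (P \ H)) := by
        gcongr
        · exact ofReal_le_volume_inter_right hP ha hb hc hab₁ hab₂
        · exact (ofReal_le_volume_inter_left hP ha hb hc' hab₁ hab₂).trans
            (measure_mono fun p hp ↦ ⟨hp.1, fun h : a.1 < p.1 ↦ lt_asymm h hp.2⟩)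
    _ = 2 * volume P := by rw [measure_inter_add_sdiff P hH]

end PlaneGeometry

section Lattice

open Set

def wedge (u : ℤ × ℤ) : ℤ × ℤ →+ ℤ :=
  AddMonoidHom.mk' (fun p ↦ u.1 * p.2 - u.2 * p.1) fun p q ↦ by
    simp only [Prod.fst_add, Prod.snd_add]
    ring

lemma wedge_apply (u p : ℤ × ℤ) : wedge u p = u.1 * p.2 - u.2 * p.1 := rfl

lemma wedge_swap (u p : ℤ × ℤ) : wedge p u = -wedge u p := by
  simp only [wedge_apply]
  ring

lemma eq_wedge_smul_sub_wedge_smul {u s : ℤ × ℤ} (h : wedge u s = 1) (p : ℤ × ℤ) :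
    p = wedge u p • s - wedge s p • u := by
  rw [wedge_apply] at h
  ext <;> simp only [wedge_apply, Prod.fst_sub, Prod.snd_sub, Prod.smul_fst, Prod.smul_snd,
    smul_eq_mul]
  · linear_combination (-p.1) * h
  · linear_combination (-p.2) * h

lemma mem_zmultiples_of_wedge_eq_zero {u s : ℤ × ℤ} (hus : wedge u s = 1) {p : ℤ × ℤ}
    (hp : wedge u p = 0) : p ∈ AddSubgroup.zmultiples u :=
  ⟨-wedge s p, by simpa [hp] using (eq_wedge_smul_sub_wedge_smul hus p).symm⟩

lemma exists_isCoprime_smul_eq {d : ℤ × ℤ} (hd : d ≠ 0) :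
    ∃ g : ℤ, g ≠ 0 ∧ ∃ u : ℤ × ℤ, IsCoprime u.1 u.2 ∧ d = g • u := by
  have : 0 < Int.gcd d.1 d.2 := Int.gcd_pos_iff.mpr (by contrapose! hd; ext <;> simp [hd])
  obtain ⟨g, u₁, u₂, hg, hu, h₁, h₂⟩ := Int.exists_gcd_one' this
  exact ⟨g, by positivity, (u₁, u₂), Int.isCoprime_iff_gcd_eq_one.mpr hu,
    by ext <;> simp [h₁, h₂, mul_comm]⟩

lemma exists_wedge_eq_one_of_isCoprime {u : ℤ × ℤ} (hu : IsCoprime u.1 u.2) :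
    ∃ s, wedge u s = 1 := by
  obtain ⟨A, B, h⟩ := hu
  exact ⟨(-B, A), by rw [wedge_apply]; linear_combination h⟩

lemma wedge_sub_eq_zero_of_collinear {S : Set (ℤ × ℤ)} (h : Collinear ℝ (emb '' S))
    {p₀ p₁ p : ℤ × ℤ} (h₀ : p₀ ∈ S) (h₁ : p₁ ∈ S) (hp : p ∈ S) :
    wedge (p₁ - p₀) (p - p₀) = 0 := by
  rw [collinear_iff_of_mem (mem_image_of_mem emb h₀)] at h
  obtain ⟨v, hv⟩ := h
  obtain ⟨t, ht⟩ := hv _ (mem_image_of_mem emb hp)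
  obtain ⟨t₁, ht₁⟩ := hv _ (mem_image_of_mem emb h₁)
  simp only [emb, Prod.ext_iff, Prod.fst_add, Prod.snd_add, Prod.smul_fst, Prod.smul_snd,
    smul_eq_mul, vadd_eq_add] at ht ht₁
  have : ((wedge (p₁ - p₀) (p - p₀) : ℤ) : ℝ) = 0 := by
    push_cast [wedge_apply, Prod.fst_sub, Prod.snd_sub]
    rw [ht.1, ht.2, ht₁.1, ht₁.2]
    ring
  exact_mod_cast this

lemma exists_wedge_eq_of_collinear {S : Set (ℤ × ℤ)} (h : Collinear ℝ (emb '' S)) :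
    ∃ u s : ℤ × ℤ, wedge u s = 1 ∧ ∀ p ∈ S, ∀ q ∈ S, wedge u p = wedge u q := by
  rcases S.subsingleton_or_nontrivial with hS | ⟨p₀, h₀, p₁, h₁, hne⟩
  · exact ⟨(1, 0), (0, 1), rfl, fun p hp q hq ↦ by rw [hS hp hq]⟩
  obtain ⟨g, hg, u, hu, hd⟩ := exists_isCoprime_smul_eq (sub_ne_zero.mpr hne.symm)
  obtain ⟨s, hs⟩ := exists_wedge_eq_one_of_isCoprime hu
  have hlevel (p : ℤ × ℤ) (hp : p ∈ S) : wedge u p = wedge u p₀ := by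
    have h := wedge_sub_eq_zero_of_collinear h h₀ h₁ hp
    rw [hd, wedge_apply] at h
    simp only [Prod.smul_fst, Prod.smul_snd, smul_eq_mul, Prod.fst_sub, Prod.snd_sub] at h
    have : g * (wedge u p - wedge u p₀) = 0 := by
      rw [wedge_apply, wedge_apply]
      linear_combination h
    exact sub_eq_zero.mp ((mul_eq_zero.mp this).resolve_left hg)
  exact ⟨u, s, hs, fun p hp q hq ↦ by rw [hlevel p hp, hlevel q hq]⟩

lemma Finset.exists_le_sub_of_lt_card {X : Finset ℤ} {r : ℕ} (h : r < X.card) :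
    ∃ a ∈ X, ∃ b ∈ X, (r : ℤ) ≤ b - a := by
  have hX : X.Nonempty := Finset.card_pos.mp (by omega)
  refine ⟨_, X.min'_mem hX, _, X.max'_mem hX, ?_⟩
  have := Finset.card_le_card (t := Finset.Icc (X.min' hX) (X.max' hX)) fun x hx ↦
    Finset.mem_Icc.mpr ⟨X.min'_le x hx, X.le_max' x hx⟩
  rw [Int.card_Icc] at this
  omega

lemma exists_le_sub_of_wedge_eq {u s : ℤ × ℤ} (hus : wedge u s = 1) {S : Finset (ℤ × ℤ)}
    (hS : ∀ p ∈ S, ∀ q ∈ S, wedge u p = wedge u q) {r : ℕ} (hr : r < S.card) :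
    ∃ a ∈ S, ∃ b ∈ S, (r : ℤ) ≤ wedge s b - wedge s a := by
  have hinj : Set.InjOn (wedge s) S := fun p hp q hq hpq ↦ by
    rw [eq_wedge_smul_sub_wedge_smul hus p, eq_wedge_smul_sub_wedge_smul hus q, hS p hp q hq, hpq]
  obtain ⟨_, hm, _, hn, hmn⟩ :=
    Finset.exists_le_sub_of_lt_card (hr.trans_eq (Finset.card_image_of_injOn hinj).symm)
  obtain ⟨a, ha, rfl⟩ := Finset.mem_image.mp hm
  obtain ⟨b, hb, rfl⟩ := Finset.mem_image.mp hn
  exact ⟨a, ha, b, hb, hmn⟩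

open MeasureTheory in
lemma ofReal_wedge_mul_le_two_mul_volume {u s : ℤ × ℤ} (hus : wedge u s = 1)
    {P : Set (ℝ × ℝ)} (hP : Convex ℝ P) {a b c c' : ℤ × ℤ} (ha : emb a ∈ P) (hb : emb b ∈ P)
    (hc : emb c ∈ P) (hc' : emb c' ∈ P) (hab : wedge u a = wedge u b)
    (hab' : wedge s a ≤ wedge s b) :
    ENNReal.ofReal (((wedge s b - wedge s a) * (wedge u c - wedge u c') : ℤ)) ≤ 2 * volume P := by
  set T := planeMap (-u.2) u.1 (-s.2) s.1
  have hT (p : ℤ × ℤ) : T (emb p) = ((wedge u p : ℝ), (wedge s p : ℝ)) := by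
    simp only [T, planeMap_apply, emb, wedge_apply]
    push_cast
    ext <;> ring
  have hdet : -(u.2 : ℝ) * s.1 - u.1 * -s.2 = 1 := by
    rw [wedge_apply] at hus
    exact_mod_cast (by linear_combination hus : -u.2 * s.1 - u.1 * -s.2 = 1)
  have hvol : volume (T '' P) = volume P := by
    rw [volume_image_planeMap, hdet]
    simp
  have := ofReal_mul_le_two_mul_volume (hP.linear_image T) (mem_image_of_mem T ha)
    (mem_image_of_mem T hb) (mem_image_of_mem T hc) (mem_image_of_mem T hc')
    (by simp [hT, hab]) (by simp [hT]; exact_mod_cast hab')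
  rw [hvol] at this
  convert this using 2
  simp [hT]

end Lattice

lemma span_V_sub_one_W_sub_one_le_augIdeal (k : Type*) [Field k] :
    Ideal.span {V k - 1, W k - 1} ≤ augIdeal k (ℤ × ℤ) := by
  rw [Ideal.span_le]
  rintro _ (rfl | rfl) <;> exact single_sub_one_mem_augIdeal _

open MeasureTheory ENNReal in
/-- The Newton polygon of an `r`-nct (an irreducible Laurent polynomial `φ`
with `φ ∈ (v-1, w-1)^r` whose Newton polygon `P_φ` has `2·area(P_φ) < r²`)
cannot contain `r + 1` lattice points on a single line, when `r ≥ 2`. -/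
theorem nct_no_collinear_points (k : Type*) [Field k] (r : ℕ) (hr : 2 ≤ r)
    (φ : AddMonoidAlgebra k (ℤ × ℤ))
    (hirr : Irreducible φ)
    (hmem : φ ∈ (Ideal.span {V k - 1, W k - 1}) ^ r)
    (harea : 2 * volume (convexHull ℝ (emb '' (φ.coeff.support : Set (ℤ × ℤ)))) <
      (r : ℝ≥0∞) ^ 2) :
    ¬ ∃ S : Finset (ℤ × ℤ), S.card = r + 1 ∧
        (∀ p ∈ S, emb p ∈ convexHull ℝ (emb '' (φ.coeff.support : Set (ℤ × ℤ)))) ∧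
        Collinear ℝ (emb '' (S : Set (ℤ × ℤ))) := by
  rintro ⟨S, hcard, hSP, hcol⟩
  set P := convexHull ℝ (emb '' (φ.coeff.support : Set (ℤ × ℤ)))
  obtain ⟨u, s, hus, hS⟩ := exists_wedge_eq_of_collinear hcol
  obtain ⟨a, ha, b, hb, hab⟩ := exists_le_sub_of_wedge_eq hus hS (by omega : r < S.card)
  have hμ : (Int.castAddHom k).comp (wedge s) u ≠ 0 := by simp [wedge_swap, hus]
  obtain ⟨c', hc', c, hc, hcc⟩ := exists_le_sub_of_mem_augIdeal_pow hus
    (fun _ ↦ mem_zmultiples_of_wedge_eq_zero hus) hμ hr hirr (Ideal.pow_right_mono (span_V_sub_one_W_sub_one_le_augIdeal k) r hmem)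
  have hN (p : ℤ × ℤ) (hp : p ∈ φ.coeff.support) : emb p ∈ P :=
    subset_convexHull ℝ _ (Set.mem_image_of_mem emb hp)
  have hvol := ofReal_wedge_mul_le_two_mul_volume hus (convex_convexHull ℝ _)
    (hSP a ha) (hSP b hb) (hN c hc) (hN c' hc') (hS a ha b hb) (by omega)
  have hr2 : ((r ^ 2 : ℕ) : ℤ) ≤ (wedge s b - wedge s a) * (wedge u c - wedge u c') := by
    push_cast
    nlinarith
  refine harea.not_ge (le_trans ?_ hvol)
  rw [← ENNReal.ofReal_natCast, ← ENNReal.ofReal_pow (Nat.cast_nonneg r)]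
  exact ENNReal.ofReal_le_ofReal (by exact_mod_cast hr2)
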